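/- Let α ≥ 0, r ≥ 0, δ > 1, β ∈ {0,1}. Set Λ₋(k) = −(1/2)√(2√(k²+k⁴)+2k²). Then there exists C such that for all t ≥ 1 and k ∈ ℝ, e^{|Λ₋(k)|(t−1)} ∫_t^∞ e^{Λ₋(k)(s−1)} |Λ₋(k)|^β s^{−δ} μ_{α,r}(k,s) ds ≤ C t^{−(δ−1+β)} μ_{α,r}(k,t). -/

import Mathlib

/-!
Since `Λ₋ ≤ 0`, the prefactor and the exponential in the integrand combine into
`e^{Λ₋(k)(s - t)} ≤ 1` for `s ≥ t`, and `μ_{α,r}(k, ·)` is nonincreasing, so `μ(k, s) ≤ μ(k, t)`.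
For `β = 0` what remains is `∫_t^∞ s^{-δ} ds = t^{1-δ}/(δ-1)`. For `β = 1` one bounds
`s^{-δ} ≤ t^{-δ}` instead and uses that `|Λ| e^{Λ(s-t)}` has integral at most `1` over `(t, ∞)`.
-/

open MeasureTheory

noncomputable def mu (α r k t : ℝ) : ℝ := 1 / (1 + (|k| * t ^ r) ^ α)

noncomputable def LamMinus (k : ℝ) : ℝ := -(1/2) * Real.sqrt (2 * Real.sqrt (k^2 + k^4) + 2 * k^2)

open Set Real

lemma LamMinus_nonpos (k : ℝ) : LamMinus k ≤ 0 := by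
  unfold LamMinus
  have := sqrt_nonneg (2 * √(k ^ 2 + k ^ 4) + 2 * k ^ 2)
  linarith

lemma mu_nonneg (α r k : ℝ) {t : ℝ} (ht : 0 ≤ t) : 0 ≤ mu α r k t := by
  unfold mu
  positivity

lemma mu_antitoneOn {α r : ℝ} (hα : 0 ≤ α) (hr : 0 ≤ r) (k : ℝ) :
    AntitoneOn (mu α r k) (Ici 0) := by
  intro t ht s _ hts
  unfold mu
  have : 0 ≤ t := ht
  gcongr

section

variable {Λ : ℝ}

lemma integral_exp_mul_sub_Ioi (hΛ : Λ < 0) (t : ℝ) :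
    ∫ s in Ioi t, exp (Λ * (s - t)) = -Λ⁻¹ := by
  simp_rw [mul_sub, sub_eq_add_neg, exp_add]
  rw [integral_mul_const, integral_exp_mul_Ioi hΛ, exp_neg]
  field_simp [(exp_pos (Λ * t)).ne']

lemma integrableOn_abs_mul_exp_mul_sub_Ioi (hΛ : Λ ≤ 0) (t : ℝ) :
    IntegrableOn (fun s => |Λ| * exp (Λ * (s - t))) (Ioi t) := by
  rcases hΛ.lt_or_eq with hΛ | rfl
  · simp_rw [mul_sub, sub_eq_add_neg, exp_add]
    exact ((integrableOn_exp_mul_Ioi hΛ t).mul_const _).const_mul _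
  · simp

lemma integral_abs_mul_exp_mul_sub_Ioi_le_one (hΛ : Λ ≤ 0) (t : ℝ) :
    ∫ s in Ioi t, |Λ| * exp (Λ * (s - t)) ≤ 1 := by
  rcases hΛ.lt_or_eq with hΛ | rfl
  · rw [integral_const_mul, integral_exp_mul_sub_Ioi hΛ, abs_of_neg hΛ, neg_mul_neg,
      mul_inv_cancel₀ hΛ.ne]
  · simp

variable {t δ : ℝ} {w g f : ℝ → ℝ}

lemma exp_abs_mul_setIntegral_le (hΛ : Λ ≤ 0) (hw : ∀ s ∈ Ioi t, 0 ≤ w s)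
    (hg : IntegrableOn g (Ioi t)) (hwg : ∀ s ∈ Ioi t, exp (Λ * (s - t)) * w s ≤ g s) :
    exp (|Λ| * (t - 1)) * ∫ s in Ioi t, exp (Λ * (s - 1)) * w s ≤ ∫ s in Ioi t, g s := by
  rw [← integral_const_mul]
  refine integral_mono_of_nonneg ?_ hg ?_
  · filter_upwards [self_mem_ae_restrict measurableSet_Ioi] with s hs
    have := hw s hs
    positivity
  · filter_upwards [self_mem_ae_restrict measurableSet_Ioi] with s hs
    have hexp : exp (|Λ| * (t - 1)) * exp (Λ * (s - 1)) = exp (Λ * (s - t)) := by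
      rw [abs_of_nonpos hΛ, ← exp_add]
      ring_nf
    rw [← mul_assoc, hexp]
    exact hwg s hs

lemma exp_abs_mul_setIntegral_rpow_le (hΛ : Λ ≤ 0) (hδ : 1 < δ) (ht : 0 < t)
    (hf₀ : ∀ s ∈ Ici t, 0 ≤ f s) (hf : AntitoneOn f (Ici t)) :
    exp (|Λ| * (t - 1)) * ∫ s in Ioi t, exp (Λ * (s - 1)) * s ^ (-δ) * f s
      ≤ (δ - 1)⁻¹ * t ^ (-(δ - 1)) * f t := by
  simp_rw [mul_assoc]
  have hint : IntegrableOn (fun s => s ^ (-δ)) (Ioi t) :=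
    integrableOn_Ioi_rpow_of_lt (by linarith) ht
  refine (exp_abs_mul_setIntegral_le hΛ ?_ (hint.const_mul (f t)) ?_).trans_eq ?_
  · intro s hs
    have := hf₀ s (Ioi_subset_Ici_self hs)
    have : 0 < s := ht.trans hs
    positivity
  · intro s hs
    have hs₀ : 0 < s := ht.trans hs
    have hfs : f s ≤ f t := hf self_mem_Ici (Ioi_subset_Ici_self hs) hs.le
    have hexp : exp (Λ * (s - t)) ≤ 1 :=
      exp_le_one_iff.2 (mul_nonpos_of_nonpos_of_nonneg hΛ (sub_nonneg.2 hs.le))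
    calc exp (Λ * (s - t)) * (s ^ (-δ) * f s) ≤ 1 * (s ^ (-δ) * f t) := by
          have := hf₀ s (Ioi_subset_Ici_self hs)
          gcongr
      _ = f t * s ^ (-δ) := by ring
  · rw [integral_const_mul, integral_Ioi_rpow_of_lt (by linarith) ht]
    have : δ - 1 ≠ 0 := by linarith
    rw [show -δ + 1 = -(δ - 1) by ring]
    field_simp

lemma exp_abs_mul_setIntegral_abs_mul_rpow_le (hΛ : Λ ≤ 0) (ht : 0 < t) (hδ : 0 ≤ δ)
    (hf₀ : ∀ s ∈ Ici t, 0 ≤ f s) (hf : AntitoneOn f (Ici t)) :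
    exp (|Λ| * (t - 1)) * ∫ s in Ioi t, exp (Λ * (s - 1)) * |Λ| * s ^ (-δ) * f s
      ≤ t ^ (-δ) * f t := by
  simp_rw [mul_assoc]
  refine (exp_abs_mul_setIntegral_le hΛ ?_
    ((integrableOn_abs_mul_exp_mul_sub_Ioi hΛ t).const_mul (t ^ (-δ) * f t)) ?_).trans ?_
  · intro s hs
    have := hf₀ s (Ioi_subset_Ici_self hs)
    have : 0 < s := ht.trans hs
    positivity
  · intro s hs
    have hfs : f s ≤ f t := hf self_mem_Ici (Ioi_subset_Ici_self hs) hs.le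
    have hst : s ^ (-δ) ≤ t ^ (-δ) := rpow_le_rpow_of_nonpos ht hs.le (by linarith)
    calc exp (Λ * (s - t)) * (|Λ| * (s ^ (-δ) * f s))
        ≤ exp (Λ * (s - t)) * (|Λ| * (t ^ (-δ) * f t)) := by
          gcongr
          exact hf₀ s (Ioi_subset_Ici_self hs)
      _ = t ^ (-δ) * f t * (|Λ| * exp (Λ * (s - t))) := by ring
  · rw [integral_const_mul]
    have := hf₀ t self_mem_Ici
    exact mul_le_of_le_one_right (by positivity) (integral_abs_mul_exp_mul_sub_Ioi_le_one hΛ t)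

end

theorem semigroup_Lam_integral_bound (α r δ β : ℝ)
    (hα : 0 ≤ α) (hr : 0 ≤ r) (hδ : 1 < δ) (hβ : β = 0 ∨ β = 1) :
    ∃ C : ℝ, ∀ t k : ℝ, 1 ≤ t →
      Real.exp (|LamMinus k| * (t - 1)) *
          ∫ s in Set.Ioi t, Real.exp (LamMinus k * (s - 1)) * |LamMinus k| ^ β * s ^ (-δ) * mu α r k s
        ≤ C * t ^ (-(δ - 1 + β)) * mu α r k t := by
  have hμ₀ (t : ℝ) (ht : 0 < t) (k : ℝ) : ∀ s ∈ Ici t, 0 ≤ mu α r k s :=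
    fun s hs => mu_nonneg α r k (ht.le.trans hs)
  have hμ (t : ℝ) (ht : 0 < t) (k : ℝ) : AntitoneOn (mu α r k) (Ici t) :=
    (mu_antitoneOn hα hr k).mono (Ici_subset_Ici.2 ht.le)
  rcases hβ with rfl | rfl
  · refine ⟨1 / (δ - 1), fun t k ht => ?_⟩
    have ht₀ : 0 < t := one_pos.trans_le ht
    simpa using exp_abs_mul_setIntegral_rpow_le (LamMinus_nonpos k) hδ ht₀ (hμ₀ t ht₀ k) (hμ t ht₀ k)
  · refine ⟨1, fun t k ht => ?_⟩
    have ht₀ : 0 < t := one_pos.trans_le ht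
    simpa using exp_abs_mul_setIntegral_abs_mul_rpow_le (LamMinus_nonpos k) ht₀ (by linarith)
      (hμ₀ t ht₀ k) (hμ t ht₀ k)
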